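/- arXiv:2405.13738 — 5 statements merged into one kernel-verified Lean document; each statement's English description precedes it below -/
import Mathlib

section
/- Let n, d, d', L be positive integers with L ≥ 2. Consider (L+1)-layer feedforward neural networks h_θ : ℝ^d → ℝ^{d'} with continuously differentiable activations ψ_1, …, ψ_L : ℝ → ℝ and widths m_1, …, m_L. If the total number of neurons m_1 + ⋯ + m_L + d' is strictly less than √(2nd' + (max(d,d')+1)² − 2·min(d,d') − 4L + 5) − max(d,d') + d' + L − 2, then for every choice of inputs x_1, …, x_n ∈ ℝ^d, the set of output tuples (y_1, …, y_n) ∈ (ℝ^{d'})^n for which there exist parameters θ with h_θ(x_i) = y_i for all i ∈ [n] has Lebesgue measure zero in (ℝ^{d'})^n. (In particular, such a network cannot interpolate n generic points of ℝ^d × ℝ^{d'}.) -/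
set_option maxHeartbeats 1000000

open scoped BigOperators

/-- The hidden layers of a feedforward neural network (with biases):
`hiddenB m ψ W b n L X` is the output of the `L`-th hidden layer, applied
column-wise to the data matrix `X ∈ ℝ^{m 0 × n}`.  Layer `ℓ+1` has width
`m (ℓ+1)`, weight matrix `W ℓ ∈ ℝ^{m ℓ × m (ℓ+1)}`, bias `b ℓ ∈ ℝ^{m (ℓ+1)}`
and activation `ψ ℓ` applied entrywise. -/
noncomputable def hiddenB (m : ℕ → ℕ) (ψ : ℕ → ℝ → ℝ)
    (W : (ℓ : ℕ) → Matrix (Fin (m ℓ)) (Fin (m (ℓ + 1))) ℝ)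
    (b : (ℓ : ℕ) → Fin (m (ℓ + 1)) → ℝ) (n : ℕ) :
    (L : ℕ) → (Fin (m 0) → Fin n → ℝ) → Fin (m L) → Fin n → ℝ
  | 0, X => X
  | L + 1, X => fun j i =>
      ψ L ((∑ s, W L s j * hiddenB m ψ W b n L X s i) + b L j)

/-! ### Auxiliary material -/

open MeasureTheory Module Set

/-- The image of a `C¹` map from a space of strictly smaller dimension is null. -/
lemma null_range_of_finrank_lt {E F : Type*} [NormedAddCommGroup E] [NormedSpace ℝ E]
    [FiniteDimensional ℝ E] [NormedAddCommGroup F] [NormedSpace ℝ F] [FiniteDimensional ℝ F]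
    [MeasurableSpace F] [BorelSpace F] (μ : Measure F) [μ.IsAddHaarMeasure]
    {f : E → F} (hf : ContDiff ℝ 1 f) (h : finrank ℝ E < finrank ℝ F) :
    μ (Set.range f) = 0 := by
  obtain ⟨π, hπ⟩ : ∃ π : F →ₗ[ℝ] E, Function.Surjective π := by
    let e : E ≃ₗ[ℝ] (Fin (finrank ℝ E) → ℝ) := (finBasis ℝ E).equivFun
    let e' : F ≃ₗ[ℝ] (Fin (finrank ℝ F) → ℝ) := (finBasis ℝ F).equivFun
    refine ⟨(e.symm.toLinearMap.comp
      (LinearMap.funLeft ℝ ℝ (Fin.castLE h.le))).comp e'.toLinearMap, ?_⟩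
    exact e.symm.surjective.comp
      ((LinearMap.funLeft_surjective_of_injective ℝ ℝ _
        (Fin.castLE_injective h.le)).comp e'.surjective)
  set π' : F →L[ℝ] E := LinearMap.toContinuousLinearMap π with hπ'
  have hπ'c : ∀ x, π' x = π x := fun x => rfl
  set g : F → F := fun x => f (π' x) with hg
  have hrange : Set.range f = g '' Set.univ := by
    rw [image_univ]
    apply Set.Subset.antisymm
    · rintro _ ⟨x, rfl⟩
      obtain ⟨y, hy⟩ := hπ x
      exact ⟨y, by simp [g, hπ'c, hy]⟩
    · rintro _ ⟨x, rfl⟩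
      exact ⟨π' x, rfl⟩
  rw [hrange]
  set f' : F → F →L[ℝ] F := fun x => (fderiv ℝ f (π' x)).comp π' with hf'
  have hder : ∀ x ∈ Set.univ, HasFDerivWithinAt g (f' x) Set.univ x := by
    intro x _
    exact ((((hf.differentiable one_ne_zero) (π' x)).hasFDerivAt).comp x
      π'.hasFDerivAt).hasFDerivWithinAt
  apply addHaar_image_eq_zero_of_det_fderivWithin_eq_zero μ hder
  intro x _
  by_contra hdet
  have hsurj : Function.Surjective (f' x) := by
    set e := LinearMap.equivOfDetNeZero ((f' x) : F →ₗ[ℝ] F) hdet with he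
    have hcoe : (e : F →ₗ[ℝ] F) = ((f' x) : F →ₗ[ℝ] F) := LinearEquiv.coe_ofIsUnitDet _
    intro y
    obtain ⟨z, hz⟩ := e.surjective y
    exact ⟨z, by rw [← hz]; exact (LinearMap.congr_fun hcoe z).symm ▸ rfl⟩
  have hsurj2 : Function.Surjective (fderiv ℝ f (π' x)) :=
    Function.Surjective.of_comp (g := ⇑π') hsurj
  have h1 : LinearMap.range ((fderiv ℝ f (π' x)) : E →ₗ[ℝ] F) = ⊤ :=
    LinearMap.range_eq_top.2 hsurj2
  have h2 := LinearMap.finrank_range_le ((fderiv ℝ f (π' x)) : E →ₗ[ℝ] F)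
  rw [h1, finrank_top] at h2
  omega

lemma two_mul_sum_consec_le (t : ℕ → ℝ) (ht : ∀ j, 0 ≤ t j) (K : ℕ) :
    2 * ∑ j ∈ Finset.range K, t j * t (j + 1) ≤ (∑ j ∈ Finset.range (K + 1), t j) ^ 2 := by
  induction K with
  | zero => simpa using sq_nonneg (t 0)
  | succ K ih =>
    rw [Finset.sum_range_succ (f := fun j => t j * t (j + 1))]
    rw [Finset.sum_range_succ (f := t) (n := K + 1)]
    have hA : t K ≤ ∑ j ∈ Finset.range (K + 1), t j :=
      Finset.single_le_sum (fun j _ => ht j) (Finset.self_mem_range_succ K)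
    nlinarith [ih, mul_nonneg (sub_nonneg.2 hA) (ht (K + 1)), sq_nonneg (t (K + 1))]

/-- The key counting estimate: the neuron bound forces the number of parameters of the
network to be smaller than `n * d'`. -/
lemma param_lt (n d d' : ℕ) (K : ℕ) (hd : 0 < d)
    (m : ℕ → ℕ) (hm0 : m 0 = d) (hmpos : ∀ ℓ, 1 ≤ ℓ → ℓ ≤ K + 2 → 0 < m ℓ)
    (hneurons : (((∑ ℓ ∈ Finset.Icc 1 (K + 2), m ℓ) + d' : ℕ) : ℝ) <
      Real.sqrt (2 * (n : ℝ) * (d' : ℝ) + (max (d : ℝ) (d' : ℝ) + 1) ^ 2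
          - 2 * min (d : ℝ) (d' : ℝ) - 4 * ((K + 2 : ℕ) : ℝ) + 5)
        - max (d : ℝ) (d' : ℝ) + (d' : ℝ) + ((K + 2 : ℕ) : ℝ) - 2) :
    (∑ ℓ ∈ Finset.range (K + 2), (m ℓ * m (ℓ + 1) + m (ℓ + 1))) + m (K + 2) * d' < n * d' := by
  set M : ℝ := max (d : ℝ) (d' : ℝ) with hM
  set μ : ℝ := min (d : ℝ) (d' : ℝ) with hμ
  set t : ℕ → ℝ := fun j => if j < K + 2 then (m (j + 1) : ℝ) - 1 else 0 with htdef
  have ht : ∀ j, 0 ≤ t j := by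
    intro j
    simp only [htdef]
    split
    · rename_i hj
      have h1 := hmpos (j + 1) (by omega) (by omega)
      have h2 : (1 : ℝ) ≤ (m (j + 1) : ℝ) := by exact_mod_cast h1
      linarith
    · exact le_refl 0
  have hm : ∀ j, j < K + 2 → (m (j + 1) : ℝ) = t j + 1 := by
    intro j hj; simp [htdef, hj]
  set T : ℝ := ∑ j ∈ Finset.range (K + 2), t j with hT
  set Q : ℝ := ∑ j ∈ Finset.range (K + 1), t j * t (j + 1) with hQdef
  have hT0 : 0 ≤ T := Finset.sum_nonneg fun j _ => ht j
  have hQle : 2 * Q ≤ T ^ 2 := two_mul_sum_consec_le t ht (K + 1)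
  have hsum01 : ∑ j ∈ Finset.range (K + 1), t j = T - t (K + 1) := by
    have h : ∑ j ∈ Finset.range (K + 2), t j
        = (∑ j ∈ Finset.range (K + 1), t j) + t (K + 1) := Finset.sum_range_succ t (K + 1)
    rw [hT]
    linarith only [h]
  have hsum1 : ∑ j ∈ Finset.range (K + 1), t (j + 1) = T - t 0 := by
    have h : ∑ j ∈ Finset.range (K + 2), t j
        = (∑ j ∈ Finset.range (K + 1), t (j + 1)) + t 0 := Finset.sum_range_succ' t (K + 1)
    rw [hT]
    linarith only [h]
  have hS : ((∑ ℓ ∈ Finset.Icc 1 (K + 2), m ℓ : ℕ) : ℝ) = T + (K + 2) := by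
    push_cast
    rw [show Finset.Icc 1 (K + 2) = Finset.Ico 1 (K + 3) by rw [← Finset.Ico_add_one_right_eq_Icc]; rfl,
      Finset.sum_Ico_eq_sum_range]
    have hc : K + 3 - 1 = K + 2 := by omega
    rw [hc]
    have he : ∀ j ∈ Finset.range (K + 2), (m (1 + j) : ℝ) = t j + 1 := by
      intro j hj
      have hj' : j < K + 2 := Finset.mem_range.1 hj
      rw [add_comm 1 j, hm j hj']
    rw [Finset.sum_congr rfl he, Finset.sum_add_distrib, Finset.sum_const, Finset.card_range]
    push_cast [hT]
    ring
  have hsplit := Finset.sum_range_succ' (fun ℓ => (m ℓ : ℝ) * (m (ℓ + 1) : ℝ)) (K + 1)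
  have hA : ∑ ℓ ∈ Finset.range (K + 2), ((m ℓ : ℝ) * (m (ℓ + 1) : ℝ)) =
      (d : ℝ) * (t 0 + 1) + (Q + (T - t (K + 1)) + (T - t 0) + (K + 1)) := by
    rw [hsplit]
    have h0 : (m 0 : ℝ) * (m (0 + 1) : ℝ) = (d : ℝ) * (t 0 + 1) := by
      rw [hm0, hm 0 (by omega)]
    have he : ∀ j ∈ Finset.range (K + 1), (m (j + 1) : ℝ) * (m (j + 1 + 1) : ℝ)
        = t j * t (j + 1) + t j + t (j + 1) + 1 := by
      intro j hj
      have hj' := Finset.mem_range.1 hj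
      rw [hm j (by omega), hm (j + 1) (by omega)]; ring
    rw [h0, Finset.sum_congr rfl he]
    rw [Finset.sum_add_distrib, Finset.sum_add_distrib, Finset.sum_add_distrib,
      Finset.sum_const, Finset.card_range, hsum01, hsum1, ← hQdef]
    push_cast
    ring
  have hSm : ∑ ℓ ∈ Finset.range (K + 2), (m (ℓ + 1) : ℝ) = T + (K + 2) := by
    rw [Finset.sum_congr rfl (fun j hj => hm j (Finset.mem_range.1 hj)),
      Finset.sum_add_distrib, Finset.sum_const, Finset.card_range, ← hT]
    push_cast; ring
  have hP : (((∑ ℓ ∈ Finset.range (K + 2), (m ℓ * m (ℓ + 1) + m (ℓ + 1))) + m (K + 2) * d' : ℕ) : ℝ)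
      = (d : ℝ) * (t 0 + 1) + (Q + (T - t (K + 1)) + (T - t 0) + (K + 1)) + (T + (K + 2))
        + (t (K + 1) + 1) * (d' : ℝ) := by
    push_cast
    rw [Finset.sum_add_distrib, hA, hSm, hm (K + 1) (by omega)]
  have hdM : (d : ℝ) ≤ M := le_max_left _ _
  have hd'M : (d' : ℝ) ≤ M := le_max_right _ _
  have h1M : (1 : ℝ) ≤ M := le_trans (by exact_mod_cast hd) hdM
  have hMμ : M + μ = (d : ℝ) + (d' : ℝ) := max_add_min _ _
  have ht0E : t 0 + t (K + 1) ≤ T := by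
    have h1 : t 0 ≤ ∑ j ∈ Finset.range (K + 1), t j :=
      Finset.single_le_sum (fun j _ => ht j) (Finset.mem_range.2 (by omega))
    have h : ∑ j ∈ Finset.range (K + 2), t j
        = (∑ j ∈ Finset.range (K + 1), t j) + t (K + 1) := Finset.sum_range_succ t (K + 1)
    rw [hT]
    linarith only [h, h1]
  have hTMs : T + M + 2 < Real.sqrt (2 * (n : ℝ) * (d' : ℝ) + (M + 1) ^ 2
      - 2 * μ - 4 * ((K : ℝ) + 2) + 5) := by
    push_cast at hneurons hS
    rw [hS] at hneurons
    linarith only [hneurons]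
  have hsq : (T + M + 2) ^ 2 < 2 * (n : ℝ) * (d' : ℝ) + (M + 1) ^ 2
      - 2 * μ - 4 * ((K : ℝ) + 2) + 5 :=
    (Real.lt_sqrt (by linarith)).1 hTMs
  have hfin : (((∑ ℓ ∈ Finset.range (K + 2), (m ℓ * m (ℓ + 1) + m (ℓ + 1)))
      + m (K + 2) * d' : ℕ) : ℝ) < (n : ℝ) * (d' : ℝ) := by
    rw [hP]
    nlinarith [hQle, hsq, mul_nonneg (sub_nonneg.2 hdM) (ht 0),
      mul_nonneg (sub_nonneg.2 hd'M) (ht (K + 1)),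
      mul_nonneg (sub_nonneg.2 h1M) (by linarith : (0:ℝ) ≤ T - t 0 - t (K + 1))]
  exact_mod_cast hfin

/-- Extend a finitely indexed family of weight matrices by zero. -/
def extW (m : ℕ → ℕ) (L : ℕ) (W : (ℓ : Fin L) → Fin (m ℓ.1) → Fin (m (ℓ.1 + 1)) → ℝ) :
    (ℓ : ℕ) → Matrix (Fin (m ℓ)) (Fin (m (ℓ + 1))) ℝ :=
  fun ℓ => if h : ℓ < L then W ⟨ℓ, h⟩ else 0

/-- Extend a finitely indexed family of bias vectors by zero. -/
def extb (m : ℕ → ℕ) (L : ℕ) (b : (ℓ : Fin L) → Fin (m (ℓ.1 + 1)) → ℝ) :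
    (ℓ : ℕ) → Fin (m (ℓ + 1)) → ℝ :=
  fun ℓ => if h : ℓ < L then b ⟨ℓ, h⟩ else 0

lemma hiddenB_congr (m : ℕ → ℕ) (ψ : ℕ → ℝ → ℝ)
    (W W' : (ℓ : ℕ) → Matrix (Fin (m ℓ)) (Fin (m (ℓ + 1))) ℝ)
    (b b' : (ℓ : ℕ) → Fin (m (ℓ + 1)) → ℝ) (n : ℕ) (K : ℕ)
    (h : ∀ ℓ, ℓ < K → W ℓ = W' ℓ ∧ b ℓ = b' ℓ) (X : Fin (m 0) → Fin n → ℝ) :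
    hiddenB m ψ W b n K X = hiddenB m ψ W' b' n K X := by
  induction K with
  | zero => rfl
  | succ K ih =>
    funext j i
    have hrec := ih (fun ℓ hl => h ℓ (Nat.lt_succ_of_lt hl))
    simp only [hiddenB, hrec, (h K (Nat.lt_succ_self K)).1, (h K (Nat.lt_succ_self K)).2]

lemma contDiff_hiddenB {E : Type*} [NormedAddCommGroup E] [NormedSpace ℝ E]
    (m : ℕ → ℕ) (ψ : ℕ → ℝ → ℝ) (L : ℕ) (hψ : ∀ ℓ, ℓ < L → ContDiff ℝ 1 (ψ ℓ))
    (n : ℕ) (X : Fin (m 0) → Fin n → ℝ)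
    (fW : E → (ℓ : Fin L) → Fin (m ℓ.1) → Fin (m (ℓ.1 + 1)) → ℝ)
    (fb : E → (ℓ : Fin L) → Fin (m (ℓ.1 + 1)) → ℝ)
    (hfW : ContDiff ℝ 1 fW) (hfb : ContDiff ℝ 1 fb) :
    ∀ K, K ≤ L →
      ContDiff ℝ 1 (fun p => hiddenB m ψ (extW m L (fW p)) (extb m L (fb p)) n K X) := by
  intro K
  induction K with
  | zero => exact fun _ => contDiff_const
  | succ K ih =>
    intro hK
    have hKL : K < L := lt_of_lt_of_le (Nat.lt_succ_self K) hK
    have IH := ih (le_of_lt hKL)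
    apply contDiff_pi.2; intro j
    apply contDiff_pi.2; intro i
    have heq : (fun p => hiddenB m ψ (extW m L (fW p)) (extb m L (fb p)) n (K + 1) X j i)
        = fun p => ψ K ((∑ s, fW p ⟨K, hKL⟩ s j *
            hiddenB m ψ (extW m L (fW p)) (extb m L (fb p)) n K X s i) + fb p ⟨K, hKL⟩ j) := by
      funext p
      have hW : extW m L (fW p) K = fW p ⟨K, hKL⟩ := dif_pos hKL
      simp only [hiddenB, hW, extb, dif_pos hKL]
    rw [heq]
    refine (hψ K hKL).comp (ContDiff.add (ContDiff.sum fun s _ => ContDiff.mul ?_ ?_) ?_)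
    · exact contDiff_pi.1 (contDiff_pi.1 (contDiff_pi.1 hfW ⟨K, hKL⟩) s) j
    · exact contDiff_pi.1 (contDiff_pi.1 IH s) i
    · exact contDiff_pi.1 (contDiff_pi.1 hfb ⟨K, hKL⟩) j

theorem stmt0 (n d d' L : ℕ) (hn : 0 < n) (hd : 0 < d) (hd' : 0 < d')
    (hL : 2 ≤ L) (ψ : ℕ → ℝ → ℝ) (hψ : ∀ ℓ, ℓ < L → ContDiff ℝ 1 (ψ ℓ))
    (m : ℕ → ℕ) (hm0 : m 0 = d) (hmpos : ∀ ℓ, 1 ≤ ℓ → ℓ ≤ L → 0 < m ℓ)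
    (hneurons : (((∑ ℓ ∈ Finset.Icc 1 L, m ℓ) + d' : ℕ) : ℝ) <
      Real.sqrt (2 * (n : ℝ) * (d' : ℝ) + (max (d : ℝ) (d' : ℝ) + 1) ^ 2
          - 2 * min (d : ℝ) (d' : ℝ) - 4 * (L : ℝ) + 5)
        - max (d : ℝ) (d' : ℝ) + (d' : ℝ) + (L : ℝ) - 2) :
    ∀ X : Fin (m 0) → Fin n → ℝ,
      MeasureTheory.volume
        {Y : Fin n → Fin d' → ℝ |
          ∃ (W : (ℓ : ℕ) → Matrix (Fin (m ℓ)) (Fin (m (ℓ + 1))) ℝ)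
            (b : (ℓ : ℕ) → Fin (m (ℓ + 1)) → ℝ)
            (V : Matrix (Fin (m L)) (Fin d') ℝ),
            ∀ i j, Y i j = ∑ k, V k j * hiddenB m ψ W b n L X k i} = 0 := by
  intro X
  obtain ⟨K, rfl⟩ : ∃ K, L = K + 2 := ⟨L - 2, by omega⟩
  set E := ((ℓ : Fin (K + 2)) → Fin (m ℓ.1) → Fin (m (ℓ.1 + 1)) → ℝ)
      × (((ℓ : Fin (K + 2)) → Fin (m (ℓ.1 + 1)) → ℝ) × (Fin (m (K + 2)) → Fin d' → ℝ))
    with hE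
  set G : E → (Fin n → Fin d' → ℝ) := fun p i j =>
      ∑ k, p.2.2 k j * hiddenB m ψ (extW m (K + 2) p.1) (extb m (K + 2) p.2.1) n (K + 2) X k i
    with hGdef
  have hsub : {Y : Fin n → Fin d' → ℝ |
      ∃ (W : (ℓ : ℕ) → Matrix (Fin (m ℓ)) (Fin (m (ℓ + 1))) ℝ)
        (b : (ℓ : ℕ) → Fin (m (ℓ + 1)) → ℝ)
        (V : Matrix (Fin (m (K + 2))) (Fin d') ℝ),
        ∀ i j, Y i j = ∑ k, V k j * hiddenB m ψ W b n (K + 2) X k i} ⊆ Set.range G := by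
    rintro Y ⟨W, b, V, hY⟩
    refine ⟨((fun ℓ => W ℓ.1), ((fun ℓ => b ℓ.1), fun k j => V k j)), ?_⟩
    have hcongr : hiddenB m ψ (extW m (K + 2) (fun ℓ => W ℓ.1))
        (extb m (K + 2) (fun ℓ => b ℓ.1)) n (K + 2) X = hiddenB m ψ W b n (K + 2) X := by
      apply hiddenB_congr
      intro ℓ hl
      constructor
      · simp [extW, hl]
      · simp [extb, hl]
    funext i j
    rw [hGdef]
    simp only
    rw [hcongr, hY i j]
  have hhid := contDiff_hiddenB m ψ (K + 2) hψ n X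
    (fun p : E => p.1) (fun p : E => p.2.1) contDiff_fst (contDiff_fst.comp contDiff_snd)
    (K + 2) le_rfl
  have hG : ContDiff ℝ 1 G := by
    apply contDiff_pi.2; intro i
    apply contDiff_pi.2; intro j
    apply ContDiff.sum
    intro k _
    apply ContDiff.mul
    · exact contDiff_pi.1 (contDiff_pi.1 (contDiff_snd.comp contDiff_snd) k) j
    · exact contDiff_pi.1 (contDiff_pi.1 hhid k) i
  have hfrE : finrank ℝ E
      = (∑ ℓ ∈ Finset.range (K + 2), (m ℓ * m (ℓ + 1) + m (ℓ + 1))) + m (K + 2) * d' := by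
    show finrank ℝ (((ℓ : Fin (K + 2)) → Fin (m ℓ.1) → Fin (m (ℓ.1 + 1)) → ℝ)
      × (((ℓ : Fin (K + 2)) → Fin (m (ℓ.1 + 1)) → ℝ) × (Fin (m (K + 2)) → Fin d' → ℝ))) = _
    have hab : ∀ a b : ℕ, finrank ℝ (Fin a → Fin b → ℝ) = a * b := by
      intro a b
      rw [Module.finrank_pi_fintype]
      simp [Module.finrank_fintype_fun_eq_card]
    rw [Module.finrank_prod, Module.finrank_prod,
      Module.finrank_pi_fintype, Module.finrank_pi_fintype]
    simp only [hab, Module.finrank_fintype_fun_eq_card, Fintype.card_fin]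
    rw [← Fin.sum_univ_eq_sum_range (fun ℓ => m ℓ * m (ℓ + 1) + m (ℓ + 1)) (K + 2)]
    rw [Finset.sum_add_distrib]
    ring
  have hfrF : finrank ℝ (Fin n → Fin d' → ℝ) = n * d' := by
    rw [Module.finrank_pi_fintype]
    simp [Module.finrank_fintype_fun_eq_card]
  have hrank : finrank ℝ E < finrank ℝ (Fin n → Fin d' → ℝ) := by
    rw [hfrE, hfrF]
    exact param_lt n d d' K hd m hm0 hmpos hneurons
  have h0 := null_range_of_finrank_lt (MeasureTheory.volume) hG hrank
  exact le_antisymm (le_trans (measure_mono hsub) (le_of_eq h0)) zero_le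
end

section
/- Let n, d, d', L be positive integers with L ≥ 2. For every vector m = (m_1, …, m_L) of positive integers satisfying Σ_{ℓ=1}^{L-1} m_ℓ m_{ℓ+1} + d·m_1 + Σ_{ℓ=1}^{L} m_ℓ + d'·m_L ≥ n·d', it holds that Σ_{ℓ=1}^{L} m_ℓ + d' ≥ √(2nd' + (max(d,d')+1)² − 2·min(d,d') − 4L + 5) − max(d,d') + d' + L − 2. -/
/-! Write `m_ℓ = 1 + x_ℓ` with `x_ℓ ≥ 0` and `K = Σ x_ℓ`, so that the number of neurons is
`K + L + d'`. In the parameter count, the adjacent products contribute `Σ x_ℓ x_{ℓ+1} ≤ K² / 2`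
plus linear terms, and the input and output layers contribute `(d - 1) x_1 + (d' - 1) x_L`
plus constants, which is at most `(max(d,d') - 1) K` plus constants because, as `L ≥ 2`, `x_1`
and `x_L` are distinct summands of `K`. Collecting terms, twice the parameter count is at
most `(K + max(d,d') + 2)² - (max(d,d') + 1)² + 2 min(d,d') + 4L - 5`, and the bound follows by
taking square roots. -/

open Finset

theorem sum_Icc_one_eq_sum_range {M : Type*} [AddCommMonoid M] (f : ℕ → M) (n : ℕ) :
    ∑ i ∈ Icc 1 n, f i = ∑ i ∈ range n, f (i + 1) := by
  rw [← Ico_add_one_right_eq_Icc, sum_Ico_eq_sum_range, add_tsub_cancel_right]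
  simp_rw [add_comm 1]

section OrderedRing

variable {R : Type*} [CommRing R] [LinearOrder R] [IsStrictOrderedRing R] {y : ℕ → R}

theorem add_le_sum_range_of_one_le (n : ℕ) (hy : ∀ i ∈ range (n + 1), 1 ≤ y i) :
    y n + n ≤ ∑ i ∈ range (n + 1), y i := by
  have hlow : #(range n) • (1 : R) ≤ ∑ i ∈ range n, y i :=
    card_nsmul_le_sum _ _ _ fun i hi => hy i (by simp at hi ⊢; omega)
  rw [sum_range_succ]
  simp only [card_range, nsmul_eq_mul, mul_one] at hlow
  linarith

/-- With `x_i = y_i - 1` this is `2 Σ x_i x_{i+1} ≤ (Σ x_i)²` for nonnegative `x`. -/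
theorem two_mul_sum_range_mul_succ_add_le (n : ℕ) (hy : ∀ i ∈ range (n + 1), 1 ≤ y i) :
    2 * ∑ i ∈ range n, y i * y (i + 1) + 2 * (y 0 + y n)
      ≤ (∑ i ∈ range (n + 1), y i - n + 1) ^ 2 + 2 * n := by
  induction n with
  | zero =>
    simp only [range_zero, sum_empty, zero_add, sum_range_one, Nat.cast_zero, sub_zero]
    nlinarith [sq_nonneg (y 0 - 1)]
  | succ n ih =>
    have hy' : ∀ i ∈ range (n + 1), 1 ≤ y i := fun i hi =>
      hy i (by simp at hi ⊢; omega)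
    have hlast := add_le_sum_range_of_one_le n hy'
    have hnew : 1 ≤ y (n + 1) := hy (n + 1) (by simp)
    rw [sum_range_succ _ n, sum_range_succ _ (n + 1)]
    push_cast
    nlinarith [ih hy', mul_nonneg (sub_nonneg.mpr hlast) (sub_nonneg.mpr hnew)]

theorem two_mul_params_add_le_sq (k : ℕ) (hy : ∀ i ∈ range (k + 2), 1 ≤ y i) (a b : R)
    (hab : 1 ≤ max a b) :
    2 * (∑ i ∈ range (k + 1), y i * y (i + 1) + a * y 0 + ∑ i ∈ range (k + 2), y i
        + b * y (k + 1)) + (max a b + 1) ^ 2 - 2 * min a b - 4 * ((k : R) + 2) + 5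
      ≤ (∑ i ∈ range (k + 2), y i - k + max a b) ^ 2 := by
  have hchain := two_mul_sum_range_mul_succ_add_le (k + 1) hy
  have hends : y 0 + y (k + 1) + k ≤ ∑ i ∈ range (k + 2), y i := by
    rw [sum_range_succ']
    have := add_le_sum_range_of_one_le (y := fun i => y (i + 1)) k
      fun i hi => hy (i + 1) (by simp at hi ⊢; omega)
    linarith
  have h0 : 1 ≤ y 0 := hy 0 (by simp)
  have hk : 1 ≤ y (k + 1) := hy (k + 1) (by simp)
  have hsum : a + b = max a b + min a b := (max_add_min a b).symm
  push_cast at hchain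
  nlinarith [mul_nonneg (sub_nonneg.mpr hab) (sub_nonneg.mpr hends),
    mul_nonneg (sub_nonneg.mpr (le_max_left a b)) (sub_nonneg.mpr h0),
    mul_nonneg (sub_nonneg.mpr (le_max_right a b)) (sub_nonneg.mpr hk)]

end OrderedRing

theorem stmt1_general (n d d' L : ℕ) (hd' : 0 < d')
    (hL : 2 ≤ L) (m : ℕ → ℕ) (hmpos : ∀ ℓ, 1 ≤ ℓ → ℓ ≤ L → 0 < m ℓ)
    (hparams : n * d' ≤
      (∑ ℓ ∈ Finset.Icc 1 (L - 1), m ℓ * m (ℓ + 1)) + d * m 1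
        + (∑ ℓ ∈ Finset.Icc 1 L, m ℓ) + d' * m L) :
    Real.sqrt (2 * (n : ℝ) * (d' : ℝ) + (max (d : ℝ) (d' : ℝ) + 1) ^ 2
        - 2 * min (d : ℝ) (d' : ℝ) - 4 * (L : ℝ) + 5)
      - max (d : ℝ) (d' : ℝ) + (d' : ℝ) + (L : ℝ) - 2 ≤
    (((∑ ℓ ∈ Finset.Icc 1 L, m ℓ) + d' : ℕ) : ℝ) := by
  obtain ⟨k, rfl⟩ : ∃ k, L = k + 2 := ⟨L - 2, by omega⟩
  set y : ℕ → ℝ := fun i => (m (i + 1) : ℝ)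
  have hy : ∀ i ∈ range (k + 2), 1 ≤ y i := fun i hi =>
    Nat.one_le_cast.mpr (hmpos (i + 1) (by omega) (by simp at hi; omega))
  have hparams_real : (n : ℝ) * d' ≤ ∑ i ∈ range (k + 1), y i * y (i + 1) + d * y 0
      + ∑ i ∈ range (k + 2), y i + d' * y (k + 1) := by
    have := (Nat.cast_le (α := ℝ)).mpr hparams
    push_cast [sum_Icc_one_eq_sum_range] at this
    simpa using this
  have hsq := two_mul_params_add_le_sq k hy (d : ℝ) d'
    (le_max_of_le_right (Nat.one_le_cast.mpr hd'))
  have hends : y (k + 1) + (k + 1 : ℕ) ≤ ∑ i ∈ range (k + 2), y i :=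
    add_le_sum_range_of_one_le (k + 1) hy
  have hsqrt :
      √(2 * n * d' + (max (d : ℝ) d' + 1) ^ 2 - 2 * min (d : ℝ) d' - 4 * ((k : ℝ) + 2) + 5) ≤
        ∑ i ∈ range (k + 2), y i - k + max (d : ℝ) d' := by
    refine Real.sqrt_le_iff.mpr ⟨?_, by linarith⟩
    push_cast at hends
    linarith [hy (k + 1) (by simp), le_max_right (d : ℝ) d', (Nat.cast_nonneg d' : (0 : ℝ) ≤ d')]
  push_cast [sum_Icc_one_eq_sum_range]
  linarith

/-- If the number of parameters
`Σ_{ℓ=1}^{L-1} m_ℓ m_{ℓ+1} + d m_1 + Σ_{ℓ=1}^L m_ℓ + d' m_L` of an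
`(L+1)`-layer FNN is at least `n d'`, then the number of neurons
`Σ_{ℓ=1}^L m_ℓ + d'` is at least
`√(2nd' + (max(d,d')+1)² − 2 min(d,d') − 4L + 5) − max(d,d') + d' + L − 2`. -/
theorem stmt1 (n d d' L : ℕ) (hn : 0 < n) (hd : 0 < d) (hd' : 0 < d')
    (hL : 2 ≤ L) (m : ℕ → ℕ) (hmpos : ∀ ℓ, 1 ≤ ℓ → ℓ ≤ L → 0 < m ℓ)
    (hparams : n * d' ≤
      (∑ ℓ ∈ Finset.Icc 1 (L - 1), m ℓ * m (ℓ + 1)) + d * m 1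
        + (∑ ℓ ∈ Finset.Icc 1 L, m ℓ) + d' * m L) :
    Real.sqrt (2 * (n : ℝ) * (d' : ℝ) + (max (d : ℝ) (d' : ℝ) + 1) ^ 2
        - 2 * min (d : ℝ) (d' : ℝ) - 4 * (L : ℝ) + 5)
      - max (d : ℝ) (d' : ℝ) + (d' : ℝ) + (L : ℝ) - 2 ≤
    (((∑ ℓ ∈ Finset.Icc 1 L, m ℓ) + d' : ℕ) : ℝ) :=
  stmt1_general n d d' L hd' hL m hmpos hparams
end

section
/- Let n, d, m be positive integers, let M ⊆ ℝ^d be open, and let f : M → ℝ^{n×m} be continuously differentiable. For v, z ∈ ℝ^m and (w, u) ∈ M × M define F̃(w, u, v, z) = f(w)v + f(u)z ∈ ℝ^n. If there exist v₀ ∈ ℝ^m and w₀ ∈ M such that the (Fréchet) derivative at w₀ of the map w ↦ f(w)v₀ has rank n (i.e., is a surjective linear map ℝ^d → ℝ^n), then F̃ is surjective onto ℝ^n, i.e., for every y ∈ ℝ^n there exist w, u ∈ M and v, z ∈ ℝ^m with f(w)v + f(u)z = y. -/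
open scoped BigOperators

/-- Lemma 2.2 / Thm 5.2 of Madden 2024. Let `M ⊆ ℝ^d` be
open and `f : M → ℝ^{n×m}` be `C¹`.  If at some `w₀ ∈ M` the derivative of
`w ↦ f(w)v₀` is a surjective linear map `ℝ^d → ℝ^n` for some `v₀`, then
`(w,u,v,z) ↦ f(w)v + f(u)z` is surjective onto `ℝ^n`. -/
theorem stmt4 (n d m : ℕ) (hn : 0 < n) (hd : 0 < d) (hm : 0 < m)
    (M : Set (Fin d → ℝ)) (hM : IsOpen M)
    (f : (Fin d → ℝ) → Fin n → Fin m → ℝ)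
    (hf : ContDiffOn ℝ 1 f M)
    (v₀ : Fin m → ℝ) (w₀ : Fin d → ℝ) (hw₀ : w₀ ∈ M)
    (D : (Fin d → ℝ) →L[ℝ] (Fin n → ℝ))
    (hD : HasFDerivAt (fun w => fun i => ∑ k, f w i k * v₀ k) D w₀)
    (hsurj : Function.Surjective D) :
    ∀ y : Fin n → ℝ, ∃ w ∈ M, ∃ u ∈ M, ∃ v z : Fin m → ℝ,
      ∀ i, (∑ k, f w i k * v k) + (∑ k, f u i k * z k) = y i := by
  intro y
  set g : (Fin d → ℝ) → Fin n → ℝ := fun w => fun i => ∑ k, f w i k * v₀ k with hg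
  -- g is C¹ at w₀
  have hfat : ContDiffAt ℝ 1 f w₀ := hf.contDiffAt (hM.mem_nhds hw₀)
  have hgat : ContDiffAt ℝ 1 g w₀ := by
    apply contDiffAt_pi.2
    intro i
    apply ContDiffAt.sum
    intro k _
    exact ((contDiffAt_pi.1 (contDiffAt_pi.1 hfat i) k)).mul contDiffAt_const
  have hstrict : HasStrictFDerivAt g (fderiv ℝ g w₀) w₀ :=
    hgat.hasStrictFDerivAt one_ne_zero
  have hfd : fderiv ℝ g w₀ = D := hD.fderiv
  rw [hfd] at hstrict
  have hrange : LinearMap.range (D : (Fin d → ℝ) →ₗ[ℝ] (Fin n → ℝ)) = ⊤ := LinearMap.range_eq_top (f := (D : (Fin d → ℝ) →ₗ[ℝ] (Fin n → ℝ))).2 hsurj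
  have hmap : Filter.map g (nhds w₀) = nhds (g w₀) :=
    hstrict.map_nhds_eq_of_surj hrange
  have himg : g '' M ∈ nhds (g w₀) := by
    rw [← hmap]; exact Filter.image_mem_map (hM.mem_nhds hw₀)
  obtain ⟨ε, hε, hball⟩ := Metric.mem_nhds_iff.1 himg
  by_cases hy : y = 0
  · refine ⟨w₀, hw₀, w₀, hw₀, 0, 0, fun i => ?_⟩
    simp [hy]
  · have hyn : (0:ℝ) < ‖y‖ := norm_pos_iff.2 hy
    set c : ℝ := (ε / 2) / ‖y‖ with hc
    have hcpos : 0 < c := div_pos (half_pos hε) hyn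
    have hp : g w₀ + c • y ∈ Metric.ball (g w₀) ε := by
      rw [Metric.mem_ball, dist_eq_norm]
      simp only [add_sub_cancel_left, norm_smul, Real.norm_eq_abs,
        abs_of_pos hcpos, hc]
      rw [abs_of_pos (div_pos (half_pos hε) hyn), div_mul_cancel₀ _ (ne_of_gt hyn)]
      linarith
    obtain ⟨w, hwM, hgw⟩ := hball hp
    refine ⟨w, hwM, w₀, hw₀, fun k => c⁻¹ * v₀ k, fun k => -(c⁻¹ * v₀ k),
      fun i => ?_⟩
    have h1 : ∑ k, f w i k * (c⁻¹ * v₀ k) = c⁻¹ * g w i := by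
      rw [hg, Finset.mul_sum]; apply Finset.sum_congr rfl; intro k _; ring
    have h2 : ∑ k, f w₀ i k * -(c⁻¹ * v₀ k) = -(c⁻¹ * g w₀ i) := by
      simp only [hg, Finset.mul_sum, ← Finset.sum_neg_distrib]
      exact Finset.sum_congr rfl fun k _ => by ring
    rw [h1, h2]
    have hgwi : g w i = g w₀ i + c * y i := by rw [hgw]; simp
    rw [hgwi]
    field_simp
    ring
end

section
/- Let n, d, m be positive integers with d ≥ 2. Let K, L be sets of nonnegative integers with min{|K|, |L|} ≥ ⌊n/(d−1)⌋·(d−1). Let α_k ∈ ℝ∖{0} for each k ∈ K and β_ℓ ∈ ℝ∖{0} for each ℓ ∈ L, and define the polynomials ψ(x) = Σ_{k∈K} α_k x^k and φ(x) = Σ_{ℓ∈L} β_ℓ x^ℓ. Then there exists a polynomial function f : ℝ^n × ℝ^d × ℝ^d × ℝ^m → ℝ that is not identically zero such that for all (u, v, w, z) with f(u, v, w, z) ≠ 0, the matrix ψ(uvᵀ) • φ(ψ(uvᵀ)wzᵀ) ∈ ℝ^{n × dm} has rank at least min{m, ⌊n/(d−1)⌋}·(d−1). -/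
open scoped BigOperators
open Polynomial

namespace Stmt5Aux

/-- coefficient of a `K`-supported sum of monomials -/
lemma coeff_finsetSum (K : Finset ℕ) (c : ℕ → ℝ) (k0 : ℕ) :
    (∑ k ∈ K, C (c k) * X ^ k).coeff k0 = if k0 ∈ K then c k0 else 0 := by
  rw [Polynomial.finset_sum_coeff]
  rw [Finset.sum_congr rfl fun k _ => by
    rw [Polynomial.coeff_C_mul, Polynomial.coeff_X_pow]]
  simp only [mul_ite, mul_one, mul_zero]
  exact Finset.sum_ite_eq K k0 c

lemma natDegree_finsetSum_le (K : Finset ℕ) (c : ℕ → ℝ) (hK : K.Nonempty) :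
    (∑ k ∈ K, C (c k) * X ^ k).natDegree ≤ K.max' hK := by
  apply Polynomial.natDegree_sum_le_of_forall_le
  intro k hk
  refine le_trans (Polynomial.natDegree_C_mul_le _ _) ?_
  rw [Polynomial.natDegree_X_pow]
  exact Finset.le_max' _ _ hk

lemma exists_eval_ne (p : ℝ[X]) (hp : p ≠ 0) : ∃ x : ℝ, p.eval x ≠ 0 := by
  by_contra h
  push_neg at h
  exact hp (Polynomial.funext fun r => by rw [h r, Polynomial.eval_zero])

lemma linIndep_X_pow {ι : Type*} [Fintype ι] (e : ι → ℕ) (he : Function.Injective e) :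
    LinearIndependent ℝ fun i => (X : ℝ[X]) ^ e i := by
  rw [Fintype.linearIndependent_iff]
  intro g hg i
  have h0 := congrArg (fun p : ℝ[X] => p.coeff (e i)) hg
  simp only [Polynomial.finset_sum_coeff, Polynomial.coeff_smul, Polynomial.coeff_X_pow,
    smul_eq_mul, mul_ite, mul_one, mul_zero, Polynomial.coeff_zero] at h0
  rwa [Finset.sum_eq_single i (fun j _ hj => by
      rw [if_neg]; exact fun hc => hj (he hc.symm))
    (fun h => absurd (Finset.mem_univ i) h), if_pos rfl] at h0

/-- If polynomials are linearly independent, there exist evaluation points making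
the evaluation matrix have nonzero determinant. -/
lemma exists_eval_det_ne_zero {ι : Type*} [Fintype ι] [DecidableEq ι] (Q : ι → ℝ[X])
    (h : LinearIndependent ℝ Q) :
    ∃ x : ι → ℝ, (Matrix.of fun a b : ι => (Q b).eval (x a)).det ≠ 0 := by
  classical
  set vv : ℝ → (ι → ℝ) := fun r i => (Q i).eval r with hvv
  have hspan : Submodule.span ℝ (Set.range vv) = ⊤ := by
    by_contra hne
    obtain ⟨f, hf0, hker⟩ := Submodule.exists_dual_map_eq_bot_of_lt_top
      (lt_top_iff_ne_top.mpr hne) inferInstance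
    have hkill : ∀ r : ℝ, f (vv r) = 0 := by
      intro r
      have hmem : f (vv r) ∈ (Submodule.span ℝ (Set.range vv)).map f :=
        ⟨vv r, Submodule.subset_span ⟨r, rfl⟩, rfl⟩
      rw [hker] at hmem
      simpa using hmem
    set c : ι → ℝ := fun i => f (fun j => if i = j then (1 : ℝ) else 0) with hc
    have hf : ∀ y : ι → ℝ, f y = ∑ i, y i * c i := by
      intro y
      conv_lhs => rw [pi_eq_sum_univ y, map_sum]
      refine Finset.sum_congr rfl fun i _ => ?_
      rw [map_smul, smul_eq_mul]
    have hP : (∑ i, c i • Q i) = 0 := by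
      apply Polynomial.funext
      intro r
      rw [Polynomial.eval_zero]
      have : (∑ i, c i • Q i).eval r = ∑ i, c i * (Q i).eval r := by
        rw [Polynomial.eval_finset_sum]
        exact Finset.sum_congr rfl fun i _ => by
          rw [Polynomial.smul_eq_C_mul, Polynomial.eval_mul, Polynomial.eval_C]
      rw [this]
      have := hkill r
      rw [hf (vv r)] at this
      rw [← this]
      exact Finset.sum_congr rfl fun i _ => mul_comm _ _
    have hc0 : ∀ i, c i = 0 := Fintype.linearIndependent_iff.mp h c hP
    apply hf0
    apply LinearMap.ext
    intro y
    rw [hf y]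
    simp [hc0]
  obtain ⟨t, hts, hsp, hli⟩ := exists_linearIndependent ℝ (Set.range vv)
  rw [hspan] at hsp
  have htfin : t.Finite := hli.setFinite
  haveI := htfin.fintype
  have hb : Module.Basis t ℝ (ι → ℝ) :=
    Module.Basis.mk hli (by rw [Subtype.range_coe, hsp])
  have hcard : Fintype.card ι = Fintype.card t := by
    have h1 := Module.finrank_eq_card_basis hb
    rw [Module.finrank_fintype_fun_eq_card] at h1
    exact h1
  let e : ι ≃ t := Fintype.equivOfCardEq hcard
  have hmem : ∀ a : ι, ((e a : ι → ℝ)) ∈ Set.range vv := fun a => hts (e a).2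
  choose x hx using hmem
  refine ⟨x, ?_⟩
  intro hdet
  obtain ⟨μ, hμ0, hμ⟩ := Matrix.exists_vecMul_eq_zero_iff.mpr hdet
  have hli2 : LinearIndependent ℝ (fun a : ι => ((e a : ι → ℝ))) :=
    hli.comp e e.injective
  have hall : ∀ a, μ a = 0 := by
    apply Fintype.linearIndependent_iff.mp hli2 μ
    funext b
    have h1 := congrFun hμ b
    simp only [Matrix.vecMul, dotProduct, Matrix.of_apply, Pi.zero_apply] at h1
    simp only [Finset.sum_apply, Pi.smul_apply, smul_eq_mul, Pi.zero_apply]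
    rw [← h1]
    refine Finset.sum_congr rfl fun a _ => ?_
    rw [← hx a]
  exact hμ0 (funext hall)

/-- There exist nodes such that all generalized Vandermonde matrices with exponents in `K`
are nonsingular. -/
lemma exists_good_nodes (d' : ℕ) (K : Finset ℕ) :
    ∃ v : Fin d' → ℝ, ∀ e : Fin d' → ℕ, Function.Injective e → (∀ j, e j ∈ K) →
      (Matrix.of fun j j' : Fin d' => v j ^ e j').det ≠ 0 := by
  classical
  let P : (Fin d' → {k // k ∈ K}) → MvPolynomial (Fin d') ℝ := fun e =>
    (Matrix.of fun j j' : Fin d' =>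
      (MvPolynomial.X j : MvPolynomial (Fin d') ℝ) ^ (e j' : ℕ)).det
  have hPev : ∀ (e : Fin d' → {k // k ∈ K}) (x : Fin d' → ℝ),
      MvPolynomial.eval x (P e) =
      (Matrix.of fun j j' : Fin d' => x j ^ (e j' : ℕ)).det := by
    intro e x
    rw [show MvPolynomial.eval x (P e) = _ from RingHom.map_det (MvPolynomial.eval x) _]
    congr 1
    ext j j'
    simp [Matrix.map_apply]
  have hPne : ∀ e : Fin d' → {k // k ∈ K},
      Function.Injective (fun j => (e j : ℕ)) → P e ≠ 0 := by
    intro e he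
    obtain ⟨x, hx⟩ := exists_eval_det_ne_zero (fun j' => (X : ℝ[X]) ^ (e j' : ℕ))
      (linIndep_X_pow _ he)
    intro h0
    apply hx
    have h1 := congrArg (MvPolynomial.eval x) h0
    rw [hPev, map_zero] at h1
    rw [← h1]
    congr 1
    ext a b
    simp [Polynomial.eval_pow]
  let F : Finset (Fin d' → {k // k ∈ K}) :=
    Finset.univ.filter fun e => Function.Injective fun j => (e j : ℕ)
  have hprod : (∏ e ∈ F, P e) ≠ 0 := by
    rw [Finset.prod_ne_zero_iff]
    intro e he
    exact hPne e (Finset.mem_filter.mp he).2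
  obtain ⟨v, hv⟩ : ∃ v : Fin d' → ℝ, MvPolynomial.eval v (∏ e ∈ F, P e) ≠ 0 := by
    by_contra h
    push_neg at h
    exact hprod (MvPolynomial.funext fun x => by rw [h x, map_zero])
  refine ⟨v, ?_⟩
  intro e he heK
  set e' : Fin d' → {k // k ∈ K} := fun j => ⟨e j, heK j⟩ with he'
  have he'F : e' ∈ F := by
    rw [Finset.mem_filter]
    exact ⟨Finset.mem_univ _, fun a b hab => he hab⟩
  have hne : MvPolynomial.eval v (P e') ≠ 0 := by
    intro h0
    apply hv
    rw [map_prod]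
    exact Finset.prod_eq_zero he'F h0
  rw [hPev] at hne
  exact hne

lemma card_vanish_lt (d' : ℕ) (K : Finset ℕ) (v : Fin d' → ℝ)
    (hv : ∀ e : Fin d' → ℕ, Function.Injective e → (∀ j, e j ∈ K) →
      (Matrix.of fun j j' : Fin d' => v j ^ e j').det ≠ 0)
    (μ : Fin d' → ℝ) (hμ : μ ≠ 0) :
    (K.filter fun k => ∑ j, μ j * v j ^ k = 0).card < d' := by
  by_contra hle
  push_neg at hle
  obtain ⟨S, hSsub, hScard⟩ := Finset.exists_subset_card_eq hle
  set e : Fin d' → ℕ := fun j' => (S.orderIsoOfFin hScard j' : ℕ) with he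
  have heinj : Function.Injective e := fun a b hab =>
    (S.orderIsoOfFin hScard).injective (Subtype.ext hab)
  have heK : ∀ j, e j ∈ K := fun j =>
    (Finset.filter_subset _ K) (hSsub (S.orderIsoOfFin hScard j).2)
  apply hv e heinj heK
  apply Matrix.exists_vecMul_eq_zero_iff.mp
  refine ⟨μ, hμ, ?_⟩
  funext j'
  have hmem : e j' ∈ K.filter fun k => ∑ j, μ j * v j ^ k = 0 :=
    hSsub (S.orderIsoOfFin hScard j').2
  have hz := (Finset.mem_filter.mp hmem).2
  simp only [Matrix.vecMul, dotProduct, Matrix.of_apply, Pi.zero_apply]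
  exact hz

/-- Main independence lemma, case `s ≥ 2` (more precisely: whenever the degree condition
`hdeg` is available). -/
lemma indep_core (K L : Finset ℕ) (hK : K.Nonempty) (α β : ℕ → ℝ)
    (hα : ∀ k ∈ K, α k ≠ 0) (hβ : ∀ ℓ ∈ L, β ℓ ≠ 0)
    (d' s : ℕ) (v : Fin d' → ℝ) (z : Fin s → ℝ)
    (hvuniq : ∀ μ : Fin d' → ℝ, (∀ k ∈ K, ∑ j, μ j * v j ^ k = 0) → μ = 0)
    (hdeg : ∀ μ : Fin d' → ℝ, μ ≠ 0 → ∃ k ∈ K, 1 ≤ k ∧ ∑ j, μ j * v j ^ k ≠ 0)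
    (hz : ∀ η : Fin s → ℝ, (∀ ℓ ∈ L, ∑ t, η t * z t ^ ℓ = 0) → η = 0) :
    LinearIndependent ℝ (fun jt : Fin d' × Fin s =>
      (∑ k ∈ K, C (α k * v jt.1 ^ k) * X ^ k) *
      (∑ ℓ ∈ L, C (β ℓ * z jt.2 ^ ℓ) * (∑ k ∈ K, C (α k) * X ^ k) ^ ℓ)) := by
  classical
  set ψP : ℝ[X] := ∑ k ∈ K, C (α k) * X ^ k with hψP
  set D := K.max' hK with hD
  have hψPcoeff : ∀ k0, ψP.coeff k0 = if k0 ∈ K then α k0 else 0 := coeff_finsetSum K α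
  have hψPne : ψP ≠ 0 := by
    intro h0
    have h1 := hψPcoeff D
    rw [h0, Polynomial.coeff_zero, if_pos (K.max'_mem hK)] at h1
    exact hα D (K.max'_mem hK) h1.symm
  have hψPdeg : ψP.natDegree = D :=
    le_antisymm (natDegree_finsetSum_le K α hK)
      (Polynomial.le_natDegree_of_ne_zero (by
        rw [hψPcoeff, if_pos (K.max'_mem hK)]
        exact hα D (K.max'_mem hK)))
  set A : Fin d' → ℝ[X] := fun j => ∑ k ∈ K, C (α k * v j ^ k) * X ^ k with hA
  have hAdeg : ∀ j, (A j).natDegree ≤ D := fun j => natDegree_finsetSum_le K _ hK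
  rw [Fintype.linearIndependent_iff]
  intro lam hlam
  set R : ℕ → ℝ[X] := fun ℓ => ∑ j, C (β ℓ * ∑ t, lam (j, t) * z t ^ ℓ) * A j with hR
  have key2 : ∑ i : Fin d' × Fin s, lam i • (A i.1 *
      ∑ ℓ ∈ L, C (β ℓ * z i.2 ^ ℓ) * ψP ^ ℓ) = ∑ ℓ ∈ L, R ℓ * ψP ^ ℓ := by
    calc ∑ i : Fin d' × Fin s, lam i • (A i.1 * ∑ ℓ ∈ L, C (β ℓ * z i.2 ^ ℓ) * ψP ^ ℓ)
        = ∑ i : Fin d' × Fin s, ∑ ℓ ∈ L,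
            C (lam i * (β ℓ * z i.2 ^ ℓ)) * A i.1 * ψP ^ ℓ := by
          refine Finset.sum_congr rfl fun i _ => ?_
          rw [Finset.mul_sum, Finset.smul_sum]
          refine Finset.sum_congr rfl fun ℓ _ => ?_
          simp only [Polynomial.smul_eq_C_mul, map_mul]
          ring
      _ = ∑ ℓ ∈ L, ∑ i : Fin d' × Fin s,
            C (lam i * (β ℓ * z i.2 ^ ℓ)) * A i.1 * ψP ^ ℓ := Finset.sum_comm
      _ = ∑ ℓ ∈ L, R ℓ * ψP ^ ℓ := by
          refine Finset.sum_congr rfl fun ℓ _ => ?_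
          rw [hR, Finset.sum_mul, Fintype.sum_prod_type]
          refine Finset.sum_congr rfl fun j _ => ?_
          rw [show β ℓ * ∑ t, lam (j, t) * z t ^ ℓ = ∑ t, lam (j, t) * (β ℓ * z t ^ ℓ) by
            rw [Finset.mul_sum]; exact Finset.sum_congr rfl fun t _ => by ring]
          rw [map_sum, Finset.sum_mul, Finset.sum_mul]
  have key : ∑ ℓ ∈ L, R ℓ * ψP ^ ℓ = 0 := by rw [← key2]; exact hlam
  have hRdeg : ∀ ℓ, (R ℓ).natDegree ≤ D := by
    intro ℓ
    apply Polynomial.natDegree_sum_le_of_forall_le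
    intro j _
    exact le_trans (Polynomial.natDegree_C_mul_le _ _) (hAdeg j)
  have hRcoeff : ∀ ℓ k0, (R ℓ).coeff k0 =
      (if k0 ∈ K then α k0 else 0) * ∑ j, (β ℓ * ∑ t, lam (j, t) * z t ^ ℓ) * v j ^ k0 := by
    intro ℓ k0
    rw [hR]
    rw [Polynomial.finset_sum_coeff]
    rw [Finset.sum_congr rfl fun j _ => by
      rw [Polynomial.coeff_C_mul, hA, coeff_finsetSum]]
    rw [Finset.mul_sum]
    refine Finset.sum_congr rfl fun j _ => ?_
    split_ifs with h
    · ring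
    · simp
  have hRzero : ∀ ℓ ∈ L, R ℓ = 0 := by
    by_contra hcon
    push_neg at hcon
    obtain ⟨ℓbad, hℓbadL, hℓbadne⟩ := hcon
    set Lne := L.filter fun ℓ => R ℓ ≠ 0 with hLne
    have hLneNon : Lne.Nonempty := ⟨ℓbad, Finset.mem_filter.mpr ⟨hℓbadL, hℓbadne⟩⟩
    set ℓs := Lne.max' hLneNon with hℓs
    have hℓsmem := Lne.max'_mem hLneNon
    have hℓsL : ℓs ∈ L := (Finset.mem_filter.mp hℓsmem).1
    have hRs : R ℓs ≠ 0 := (Finset.mem_filter.mp hℓsmem).2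
    set μ : Fin d' → ℝ := fun j => β ℓs * ∑ t, lam (j, t) * z t ^ ℓs with hμdef
    have hμne : μ ≠ 0 := by
      intro h0
      apply hRs
      rw [hR]
      apply Finset.sum_eq_zero
      intro j _
      rw [show β ℓs * ∑ t, lam (j, t) * z t ^ ℓs = μ j from rfl, congrFun h0 j]
      simp
    obtain ⟨k0, hk0K, hk01, hk0ne⟩ := hdeg μ hμne
    have hcoeffk0 : (R ℓs).coeff k0 = α k0 * ∑ j, μ j * v j ^ k0 := by
      rw [hRcoeff, if_pos hk0K]
    have hdegR : 1 ≤ (R ℓs).natDegree := by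
      refine le_trans hk01 (Polynomial.le_natDegree_of_ne_zero ?_)
      rw [hcoeffk0]
      exact mul_ne_zero (hα _ hk0K) hk0ne
    set N := (R ℓs).natDegree + ℓs * D with hN
    have hmulne : R ℓs * ψP ^ ℓs ≠ 0 := mul_ne_zero hRs (pow_ne_zero _ hψPne)
    have hdegmul : (R ℓs * ψP ^ ℓs).natDegree = N := by
      rw [Polynomial.natDegree_mul hRs (pow_ne_zero _ hψPne),
        Polynomial.natDegree_pow, hψPdeg]
    have hothers : ∀ ℓ ∈ L.erase ℓs, (R ℓ * ψP ^ ℓ).coeff N = 0 := by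
      intro ℓ hℓ
      rcases eq_or_ne (R ℓ) 0 with h | h
      · rw [h, zero_mul, Polynomial.coeff_zero]
      · have hℓLne : ℓ ∈ Lne := Finset.mem_filter.mpr ⟨(Finset.mem_erase.mp hℓ).2, h⟩
        have hlt : ℓ < ℓs :=
          lt_of_le_of_ne (Finset.le_max' _ _ hℓLne) (Finset.mem_erase.mp hℓ).1
        apply Polynomial.coeff_eq_zero_of_natDegree_lt
        calc (R ℓ * ψP ^ ℓ).natDegree ≤ (R ℓ).natDegree + (ψP ^ ℓ).natDegree :=
              Polynomial.natDegree_mul_le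
          _ ≤ D + ℓ * D := by
              rw [Polynomial.natDegree_pow, hψPdeg]
              exact Nat.add_le_add_right (hRdeg ℓ) _
          _ = (ℓ + 1) * D := by ring
          _ ≤ ℓs * D := Nat.mul_le_mul_right _ hlt
          _ < N := by omega
    have hcoeffN : (∑ ℓ ∈ L, R ℓ * ψP ^ ℓ).coeff N = (R ℓs * ψP ^ ℓs).coeff N := by
      rw [Polynomial.finset_sum_coeff, ← Finset.sum_erase_add _ _ hℓsL,
        Finset.sum_eq_zero hothers, zero_add]
    have hzero : (R ℓs * ψP ^ ℓs).coeff N = 0 := by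
      rw [← hcoeffN, key, Polynomial.coeff_zero]
    have hlc := Polynomial.leadingCoeff_ne_zero.mpr hmulne
    rw [Polynomial.leadingCoeff, hdegmul] at hlc
    exact hlc hzero
  intro i
  have hzero : ∀ (j : Fin d') (ℓ : ℕ), ℓ ∈ L → ∑ t, lam (j, t) * z t ^ ℓ = 0 := by
    intro j ℓ hℓ
    have h1 : (fun j => β ℓ * ∑ t, lam (j, t) * z t ^ ℓ) = 0 := by
      apply hvuniq
      intro k hk
      have h2 := hRcoeff ℓ k
      rw [hRzero ℓ hℓ, Polynomial.coeff_zero, if_pos hk] at h2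
      have h3 := h2.symm
      rcases mul_eq_zero.mp h3 with h | h
      · exact absurd h (hα k hk)
      · exact h
    have h4 := congrFun h1 j
    simp only [Pi.zero_apply] at h4
    rcases mul_eq_zero.mp h4 with h | h
    · exact absurd h (hβ ℓ hℓ)
    · exact h
  have h5 : (fun t => lam (i.1, t)) = 0 :=
    hz _ (fun ℓ hℓ => hzero i.1 ℓ hℓ)
  have h6 := congrFun h5 i.2
  simpa using h6

/-- Main independence lemma, case `s = 1`. -/
lemma indep_core_one (K L : Finset ℕ) (α β : ℕ → ℝ)
    (hα : ∀ k ∈ K, α k ≠ 0)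
    (d' s : ℕ) (hs : s = 1) (v : Fin d' → ℝ) (z : Fin s → ℝ)
    (hvuniq : ∀ μ : Fin d' → ℝ, (∀ k ∈ K, ∑ j, μ j * v j ^ k = 0) → μ = 0)
    (hW : (∑ ℓ ∈ L, C (β ℓ * z (Fin.cast hs.symm 0) ^ ℓ) *
      (∑ k ∈ K, C (α k) * X ^ k) ^ ℓ) ≠ 0) :
    LinearIndependent ℝ (fun jt : Fin d' × Fin s =>
      (∑ k ∈ K, C (α k * v jt.1 ^ k) * X ^ k) *
      (∑ ℓ ∈ L, C (β ℓ * z jt.2 ^ ℓ) * (∑ k ∈ K, C (α k) * X ^ k) ^ ℓ)) := by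
  classical
  subst hs
  rw [Fintype.linearIndependent_iff]
  intro lam hlam
  set ψP : ℝ[X] := ∑ k ∈ K, C (α k) * X ^ k with hψP
  set A : Fin d' → ℝ[X] := fun j => ∑ k ∈ K, C (α k * v j ^ k) * X ^ k with hA
  set W : ℝ[X] := ∑ ℓ ∈ L, C (β ℓ * z 0 ^ ℓ) * ψP ^ ℓ with hWdef
  have h1 : (∑ j, C (lam (j, 0)) * A j) * W = 0 := by
    rw [Finset.sum_mul, ← hlam, Fintype.sum_prod_type]
    refine Finset.sum_congr rfl fun j _ => ?_
    rw [Fin.sum_univ_one]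
    rw [Polynomial.smul_eq_C_mul, mul_assoc]
  rcases mul_eq_zero.mp h1 with h | h
  · have h2 : (fun j => lam (j, 0)) = 0 := by
      apply hvuniq
      intro k hk
      have h3 := congrArg (fun p : ℝ[X] => p.coeff k) h
      simp only [Polynomial.coeff_zero] at h3
      rw [Polynomial.finset_sum_coeff] at h3
      rw [Finset.sum_congr rfl fun j _ => by
        rw [Polynomial.coeff_C_mul, hA, coeff_finsetSum]] at h3
      rw [Finset.sum_congr rfl fun j _ => by rw [if_pos hk]] at h3
      have h4 : α k * ∑ j, lam (j, 0) * v j ^ k = 0 := by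
        rw [Finset.mul_sum, ← h3]
        exact Finset.sum_congr rfl fun j _ => by ring
      rcases mul_eq_zero.mp h4 with h5 | h5
      · exact absurd h5 (hα k hk)
      · exact h5
    intro i
    have h6 := congrFun h2 i.1
    simp only [Pi.zero_apply] at h6
    have : i = (i.1, 0) := Prod.ext rfl (Subsingleton.elim _ _)
    rw [this]
    exact h6
  · exact absurd h hW

lemma rank_submatrix_le' {l n' o p : Type*} [Fintype l] [Fintype n'] [Fintype o] [Fintype p]
    [DecidableEq l] [DecidableEq n'] (M : Matrix l n' ℝ) (f : o → l) (g : p → n') :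
    (M.submatrix f g).rank ≤ M.rank := by
  have h : M.submatrix f g =
      (Matrix.of fun a i => if f a = i then (1 : ℝ) else 0) * M *
      (Matrix.of fun j b => if j = g b then (1 : ℝ) else 0) := by
    ext a b
    simp only [Matrix.submatrix_apply, Matrix.mul_apply, Matrix.of_apply, ite_mul, one_mul,
      zero_mul, mul_ite, mul_one, mul_zero]
    rw [Finset.sum_congr rfl fun j _ => by
      rw [Finset.sum_ite_eq (Finset.univ : Finset l) (f a) (fun i => M i j),
        if_pos (Finset.mem_univ _)]]
    rw [Finset.sum_ite_eq' (Finset.univ : Finset n') (g b) (fun j => M (f a) j),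
      if_pos (Finset.mem_univ _)]
  rw [h]
  exact le_trans (Matrix.rank_mul_le_left _ _) (Matrix.rank_mul_le_right _ _)

end Stmt5Aux

/-- polynomial case.  Let `ψ(x) = Σ_{k∈K} α_k x^k` and
`φ(x) = Σ_{ℓ∈L} β_ℓ x^ℓ` with all listed coefficients nonzero and
`min{|K|,|L|} ≥ ⌊n/(d−1)⌋(d−1)`.  Then there is a nonzero polynomial `p` in
the variables `(u,v,w,z) ∈ ℝ^n × ℝ^d × ℝ^d × ℝ^m` such that whenever
`p(u,v,w,z) ≠ 0`, the face-splitting product `ψ(uvᵀ) • φ(ψ(uvᵀ)wzᵀ)` has rank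
at least `min{m, ⌊n/(d−1)⌋}(d−1)`. -/
theorem stmt5 (n d m : ℕ) (hn : 0 < n) (hd : 2 ≤ d) (hm : 0 < m)
    (K L : Finset ℕ) (hKL : n / (d - 1) * (d - 1) ≤ min K.card L.card)
    (α β : ℕ → ℝ) (hα : ∀ k ∈ K, α k ≠ 0) (hβ : ∀ ℓ ∈ L, β ℓ ≠ 0)
    (ψ φ : ℝ → ℝ)
    (hψ : ∀ x, ψ x = ∑ k ∈ K, α k * x ^ k)
    (hφ : ∀ x, φ x = ∑ ℓ ∈ L, β ℓ * x ^ ℓ) :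
    ∃ p : MvPolynomial (Fin n ⊕ (Fin d ⊕ (Fin d ⊕ Fin m))) ℝ, p ≠ 0 ∧
      ∀ (u : Fin n → ℝ) (v : Fin d → ℝ) (w : Fin d → ℝ) (z : Fin m → ℝ),
        MvPolynomial.eval (Sum.elim u (Sum.elim v (Sum.elim w z))) p ≠ 0 →
        min m (n / (d - 1)) * (d - 1) ≤
          Matrix.rank (Matrix.of fun (i : Fin n) (jk : Fin d × Fin m) =>
            ψ (u i * v jk.1) *
              φ ((∑ j, ψ (u i * v j) * w j) * z jk.2)) := by
  classical
  open Stmt5Aux in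
  set d' := d - 1 with hd'def
  set s := min m (n / d') with hsdef
  -- trivial case
  rcases Nat.eq_zero_or_pos s with hs0 | hs1
  · refine ⟨1, one_ne_zero, ?_⟩
    intro u v w z _
    rw [hs0, zero_mul]
    exact Nat.zero_le _
  -- main case
  have hd'1 : 1 ≤ d' := by omega
  have hqd' : n / d' * d' ≤ n := Nat.div_mul_le_self n d'
  have hsd'K : s * d' ≤ K.card :=
    le_trans (Nat.mul_le_mul_right _ (min_le_right m _))
      (le_trans hKL (min_le_left _ _))
  have hsd'L : s * d' ≤ L.card :=
    le_trans (Nat.mul_le_mul_right _ (min_le_right m _))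
      (le_trans hKL (min_le_right _ _))
  have hsd'n : s * d' ≤ n :=
    le_trans (Nat.mul_le_mul_right _ (min_le_right m _)) hqd'
  have hd'K : d' ≤ K.card := le_trans (by nlinarith) hsd'K
  have hsL : s ≤ L.card := le_trans (by nlinarith) hsd'L
  have hKne : K.Nonempty := Finset.card_pos.mp (by omega)
  have hLne : L.Nonempty := Finset.card_pos.mp (by omega)
  have hsm : s ≤ m := min_le_left _ _
  have hd'd : d' < d := by omega
  -- choose v
  obtain ⟨v, hv⟩ := exists_good_nodes d' K
  have hvuniq : ∀ μ : Fin d' → ℝ, (∀ k ∈ K, ∑ j, μ j * v j ^ k = 0) → μ = 0 := by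
    intro μ hμ
    by_contra hne
    have h1 := card_vanish_lt d' K v hv μ hne
    rw [Finset.filter_true_of_mem fun k hk => hμ k hk] at h1
    omega
  -- choose z together with the independence statement
  have hexz : ∃ z : Fin s → ℝ, LinearIndependent ℝ (fun jt : Fin d' × Fin s =>
      (∑ k ∈ K, C (α k * v jt.1 ^ k) * X ^ k) *
      (∑ ℓ ∈ L, C (β ℓ * z jt.2 ^ ℓ) * (∑ k ∈ K, C (α k) * X ^ k) ^ ℓ)) := by
    by_cases hK1 : d' + 1 ≤ K.card
    · -- general case: use indep_core
      obtain ⟨z, hzn⟩ := exists_good_nodes s L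
      have hzuniq : ∀ η : Fin s → ℝ, (∀ ℓ ∈ L, ∑ t, η t * z t ^ ℓ = 0) → η = 0 := by
        intro η hη
        by_contra hne
        have h1 := card_vanish_lt s L z hzn η hne
        rw [Finset.filter_true_of_mem fun ℓ hℓ => hη ℓ hℓ] at h1
        omega
      refine ⟨z, indep_core K L hKne α β hα hβ d' s v z hvuniq ?_ hzuniq⟩
      intro μ hμ
      have h1 := card_vanish_lt d' K v hv μ hμ
      have h2 : (K.filter fun k => ∑ j, μ j * v j ^ k ≠ 0).card +
          (K.filter fun k => ¬ (∑ j, μ j * v j ^ k ≠ 0)).card = K.card :=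
        Finset.card_filter_add_card_filter_not _
      have h3 : (K.filter fun k => ¬ (∑ j, μ j * v j ^ k ≠ 0)) =
          (K.filter fun k => ∑ j, μ j * v j ^ k = 0) := by
        apply Finset.filter_congr
        intro k _
        simp
      rw [h3] at h2
      have h4 : 2 ≤ (K.filter fun k => ∑ j, μ j * v j ^ k ≠ 0).card := by omega
      obtain ⟨a, ha, b, hb, hab⟩ := Finset.one_lt_card.mp h4
      rcases le_total a b with hle | hle
      · refine ⟨b, (Finset.mem_filter.mp hb).1, by omega, (Finset.mem_filter.mp hb).2⟩
      · refine ⟨a, (Finset.mem_filter.mp ha).1, by omega, (Finset.mem_filter.mp ha).2⟩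
    · -- here K.card = d', hence s = 1
      have hKc : K.card = d' := by omega
      have hs1' : s = 1 := by nlinarith
      -- choose z making W nonzero
      set ψP : ℝ[X] := ∑ k ∈ K, C (α k) * X ^ k with hψP
      have hψPne : ψP ≠ 0 := by
        intro h0
        have h1 := coeff_finsetSum K α (K.max' hKne)
        rw [← hψP, h0, Polynomial.coeff_zero, if_pos (K.max'_mem hKne)] at h1
        exact hα _ (K.max'_mem hKne) h1.symm
      obtain ⟨x0, hx0⟩ := exists_eval_ne ψP hψPne
      have hφPne : (∑ ℓ ∈ L, C (β ℓ) * X ^ ℓ : ℝ[X]) ≠ 0 := by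
        intro h0
        have h1 := coeff_finsetSum L β (L.max' hLne)
        rw [h0, Polynomial.coeff_zero, if_pos (L.max'_mem hLne)] at h1
        exact hβ _ (L.max'_mem hLne) h1.symm
      obtain ⟨y0, hy0⟩ := exists_eval_ne _ hφPne
      set z : Fin s → ℝ := fun _ => y0 / ψP.eval x0 with hzdef
      have hWne : (∑ ℓ ∈ L, C (β ℓ * z (Fin.cast hs1'.symm 0) ^ ℓ) * ψP ^ ℓ) ≠ 0 := by
        intro h0
        apply hy0
        have h1 := congrArg (Polynomial.eval x0) h0
        rw [Polynomial.eval_zero, Polynomial.eval_finset_sum] at h1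
        rw [Polynomial.eval_finset_sum]
        rw [← h1]
        refine Finset.sum_congr rfl fun ℓ _ => ?_
        rw [Polynomial.eval_mul, Polynomial.eval_C, Polynomial.eval_pow,
          Polynomial.eval_mul, Polynomial.eval_C, Polynomial.eval_pow,
          Polynomial.eval_X]
        have hzval : z (Fin.cast hs1'.symm 0) = y0 / Polynomial.eval x0 ψP := rfl
        rw [hzval, div_pow, mul_assoc, div_mul_cancel₀ _ (pow_ne_zero _ hx0)]
      exact ⟨z, indep_core_one K L α β hα d' s hs1' v z hvuniq hWne⟩
  obtain ⟨z, hQ⟩ := hexz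
  obtain ⟨x, hxdet⟩ := exists_eval_det_ne_zero _ hQ
  -- the multivariate polynomial
  have hd's : d' * s ≤ n := by rw [mul_comm]; exact hsd'n
  set U : Fin n → MvPolynomial (Fin n ⊕ (Fin d ⊕ (Fin d ⊕ Fin m))) ℝ :=
    fun i => MvPolynomial.X (Sum.inl i) with hU
  set V : Fin d → MvPolynomial (Fin n ⊕ (Fin d ⊕ (Fin d ⊕ Fin m))) ℝ :=
    fun j => MvPolynomial.X (Sum.inr (Sum.inl j)) with hV
  set Wv : Fin d → MvPolynomial (Fin n ⊕ (Fin d ⊕ (Fin d ⊕ Fin m))) ℝ :=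
    fun j => MvPolynomial.X (Sum.inr (Sum.inr (Sum.inl j))) with hWv
  set Z : Fin m → MvPolynomial (Fin n ⊕ (Fin d ⊕ (Fin d ⊕ Fin m))) ℝ :=
    fun k => MvPolynomial.X (Sum.inr (Sum.inr (Sum.inr k))) with hZ
  set Ent : Fin n → Fin d × Fin m → MvPolynomial (Fin n ⊕ (Fin d ⊕ (Fin d ⊕ Fin m))) ℝ :=
    fun i jk =>
      (∑ k ∈ K, MvPolynomial.C (α k) * (U i * V jk.1) ^ k) *
      (∑ ℓ ∈ L, MvPolynomial.C (β ℓ) *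
        ((∑ j, (∑ k ∈ K, MvPolynomial.C (α k) * (U i * V j) ^ k) * Wv j) * Z jk.2) ^ ℓ)
    with hEnt
  set rmb : Fin d' × Fin s → Fin n := fun a => Fin.castLE hd's (finProdFinEquiv a) with hrmb
  set cmb : Fin d' × Fin s → Fin d × Fin m :=
    fun a => (Fin.castLE (le_of_lt hd'd) a.1, Fin.castLE hsm a.2) with hcmb
  set p : MvPolynomial (Fin n ⊕ (Fin d ⊕ (Fin d ⊕ Fin m))) ℝ :=
    (Matrix.of fun a b : Fin d' × Fin s => Ent (rmb a) (cmb b)).det with hp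
  have keyEval : ∀ (u : Fin n → ℝ) (v' w' : Fin d → ℝ) (z' : Fin m → ℝ),
      MvPolynomial.eval (Sum.elim u (Sum.elim v' (Sum.elim w' z'))) p =
      ((Matrix.of fun (i : Fin n) (jk : Fin d × Fin m) =>
        ψ (u i * v' jk.1) * φ ((∑ j, ψ (u i * v' j) * w' j) * z' jk.2)).submatrix
          rmb cmb).det := by
    intro u v' w' z'
    rw [hp, RingHom.map_det]
    congr 1
    ext a b
    simp only [RingHom.mapMatrix_apply, Matrix.map_apply, Matrix.of_apply,
      Matrix.submatrix_apply, hEnt, hU, hV, hWv, hZ, hcmb, map_mul, map_sum, map_pow,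
      MvPolynomial.eval_C, MvPolynomial.eval_X, Sum.elim_inl, Sum.elim_inr]
    simp only [hψ, hφ]
  refine ⟨p, ?_, ?_⟩
  · -- p ≠ 0
    intro hp0
    set u0 : Fin n → ℝ := fun i =>
      if h : (i : ℕ) < d' * s then x (finProdFinEquiv.symm ⟨(i : ℕ), h⟩) else 0 with hu0
    set v0 : Fin d → ℝ := fun j => if h : (j : ℕ) < d' then v ⟨(j : ℕ), h⟩ else 1 with hv0
    set w0 : Fin d → ℝ := fun j => if (j : ℕ) = d' then 1 else 0 with hw0
    set z0 : Fin m → ℝ := fun t => if h : (t : ℕ) < s then z ⟨(t : ℕ), h⟩ else 0 with hz0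
    have hkey := keyEval u0 v0 w0 z0
    rw [hp0, map_zero] at hkey
    apply hxdet
    have hsum : ∀ y : ℝ, (∑ j, ψ (y * v0 j) * w0 j) = ψ y := by
      intro y
      rw [Finset.sum_eq_single (⟨d', hd'd⟩ : Fin d)]
      · have hv0d : v0 ⟨d', hd'd⟩ = 1 := by
          rw [hv0]; exact dif_neg (lt_irrefl d')
        have hw0d : w0 ⟨d', hd'd⟩ = 1 := by rw [hw0]; simp
        rw [hv0d, hw0d, mul_one, mul_one]
      · intro j _ hj
        have hw0j : w0 j = 0 := by
          rw [hw0]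
          exact if_neg fun hc => hj (Fin.ext hc)
        rw [hw0j, mul_zero]
      · intro h; exact absurd (Finset.mem_univ _) h
    have hMeq : ((Matrix.of fun (i : Fin n) (jk : Fin d × Fin m) =>
        ψ (u0 i * v0 jk.1) * φ ((∑ j, ψ (u0 i * v0 j) * w0 j) * z0 jk.2)).submatrix
          rmb cmb) = Matrix.of fun a b : Fin d' × Fin s =>
            (((∑ k ∈ K, C (α k * v b.1 ^ k) * X ^ k) *
              (∑ ℓ ∈ L, C (β ℓ * z b.2 ^ ℓ) * (∑ k ∈ K, C (α k) * X ^ k) ^ ℓ))).eval (x a) := by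
      ext a b
      have hu : u0 (rmb a) = x a := by
        have hlt : ((rmb a : Fin n) : ℕ) < d' * s := by
          simpa [hrmb] using (finProdFinEquiv a).isLt
        have h1 : (⟨((rmb a : Fin n) : ℕ), hlt⟩ : Fin (d' * s)) = finProdFinEquiv a :=
          Fin.ext (by simp [hrmb])
        have h2 : finProdFinEquiv.symm (⟨((rmb a : Fin n) : ℕ), hlt⟩ : Fin (d' * s)) = a := by
          rw [h1, Equiv.symm_apply_apply]
        simp only [hu0]
        rw [dif_pos hlt, h2]
      have hvb : v0 (cmb b).1 = v b.1 := by
        have hltb : (((cmb b).1 : Fin d) : ℕ) < d' := by simp [hcmb]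
        have h1 : (⟨(((cmb b).1 : Fin d) : ℕ), hltb⟩ : Fin d') = b.1 :=
          Fin.ext (by simp [hcmb])
        simp only [hv0]
        rw [dif_pos hltb, h1]
      have hzb : z0 (cmb b).2 = z b.2 := by
        have hltb : (((cmb b).2 : Fin m) : ℕ) < s := by simp [hcmb]
        have h1 : (⟨(((cmb b).2 : Fin m) : ℕ), hltb⟩ : Fin s) = b.2 :=
          Fin.ext (by simp [hcmb])
        simp only [hz0]
        rw [dif_pos hltb, h1]
      rw [Matrix.submatrix_apply, Matrix.of_apply, Matrix.of_apply, hu, hvb, hzb, hsum]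
      simp only [Polynomial.eval_mul, Polynomial.eval_finset_sum, Polynomial.eval_C,
        Polynomial.eval_pow, Polynomial.eval_X]
      rw [hψ (x a * v b.1), hφ (ψ (x a) * z b.2)]
      congr 1
      · refine Finset.sum_congr rfl fun k _ => ?_
        rw [mul_pow]; ring
      · refine Finset.sum_congr rfl fun ℓ _ => ?_
        rw [mul_pow, hψ (x a)]
        ring
    rw [hMeq] at hkey
    exact hkey.symm
  · -- rank bound
    intro u v' w' z' hne
    have hkey := keyEval u v' w' z'
    set M : Matrix (Fin n) (Fin d × Fin m) ℝ := Matrix.of fun (i : Fin n) (jk : Fin d × Fin m) =>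
      ψ (u i * v' jk.1) * φ ((∑ j, ψ (u i * v' j) * w' j) * z' jk.2) with hM
    have hdet : ((M).submatrix rmb cmb).det ≠ 0 := by rw [← hkey]; exact hne
    have hUnit : IsUnit (M.submatrix rmb cmb) :=
      (Matrix.isUnit_iff_isUnit_det _).mpr (isUnit_iff_ne_zero.mpr hdet)
    have h1 : (M.submatrix rmb cmb).rank = Fintype.card (Fin d' × Fin s) :=
      Matrix.rank_of_isUnit _ hUnit
    have h2 : (M.submatrix rmb cmb).rank ≤ M.rank := rank_submatrix_le' M rmb cmb
    have h3 : Fintype.card (Fin d' × Fin s) = d' * s := by simp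
    have h4 : s * d' = d' * s := mul_comm _ _
    omega
end

section
/- Let n, d, m be positive integers with d ≥ 2. Let K and L be finite sets of nonnegative integers, let α_k ∈ ℝ for k ∈ K and β_ℓ ∈ ℝ for ℓ ∈ L, and define ψ(x) = Σ_{k∈K} α_k x^k and φ(x) = Σ_{ℓ∈L} β_ℓ x^ℓ. For ℓ ∈ L and a nonnegative integer r, define γ_{ℓ,r} = Σ α_{k_1}⋯α_{k_ℓ}, the sum over all tuples (k_1, …, k_ℓ) ∈ K^ℓ with k_1 + ⋯ + k_ℓ = r (with the convention γ_{0,r} = 1 if r = 0 and γ_{0,r} = 0 otherwise). Let u ∈ ℝ^n, let v ∈ ℝ^d with v_d = 1, let w = e_d ∈ ℝ^d (the d-th standard coordinate vector), and let z ∈ ℝ^m. Then ψ(uvᵀ) • φ(ψ(uvᵀ)wzᵀ) = Σ_{k∈K} Σ_{ℓ∈L} Σ_{r} α_k β_ℓ γ_{ℓ,r} u^{(k+r)} (v^{(k)} ⊗ z^{(ℓ)})ᵀ, where the inner sum ranges over all nonnegative integers r expressible as a sum of ℓ elements of K (equivalently, over all r, since γ_{ℓ,r} = 0 otherwise). -/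
/-!
Since `w = e_d` and `v_d = 1`, the column `ψ(uvᵀ)w` is `ψ(u)`, so entrywise the product is
`ψ(u_i v_j) · φ(ψ(u_i) z_k)`. Expanding `φ` leaves powers `ψ(u_i)^ℓ`, and the multinomial
expansion of `(Σ_{k∈K} α_k x^k)^ℓ`, grouped by total degree `r`, has coefficients `γ_{ℓ,r}`.
-/

open scoped BigOperators

open Finset

section CompositionCoeff

variable {R : Type*} [CommSemiring R]

/-- The paper's `γ_{ℓ,r}`: the coefficient of `x ^ r` in `(Σ_{k∈K} α_k x^k) ^ ℓ`. -/
def compositionCoeff (K : Finset ℕ) (α : ℕ → R) (l r : ℕ) : R :=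
  ∑ k ∈ Finset.filter (fun k : Fin l → ℕ => (∑ i, k i) = r)
      (Fintype.piFinset fun _ : Fin l => K),
    ∏ i, α (k i)

lemma sum_le_mul_sup_of_mem_piFinset {K : Finset ℕ} {l : ℕ} {k : Fin l → ℕ}
    (hk : k ∈ Fintype.piFinset fun _ : Fin l => K) : ∑ i, k i ≤ l * K.sup id :=
  calc ∑ i, k i ≤ ∑ _i : Fin l, K.sup id :=
        sum_le_sum fun i _ => le_sup (f := id) (Fintype.mem_piFinset.mp hk i)
    _ = l * K.sup id := by simp

theorem sum_mul_pow_pow (K : Finset ℕ) (α : ℕ → R) (x : R) (l : ℕ) :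
    (∑ k ∈ K, α k * x ^ k) ^ l
      = ∑ r ∈ range (l * K.sup id + 1), compositionCoeff K α l r * x ^ r := by
  rw [sum_pow', ← sum_fiberwise_of_maps_to (t := range (l * K.sup id + 1))
    (g := fun k : Fin l → ℕ => ∑ i, k i)
    fun k hk => mem_range_succ_iff.mpr (sum_le_mul_sup_of_mem_piFinset hk)]
  refine sum_congr rfl fun r _ => ?_
  rw [compositionCoeff, sum_mul]
  refine sum_congr rfl fun k hk => ?_
  rw [prod_mul_distrib, prod_pow_eq_pow_sum, (mem_filter.mp hk).2]

theorem sum_mul_pow_mul_sum_mul_pow_sum (K L : Finset ℕ) (α β : ℕ → R) (a b c : R) :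
    (∑ k ∈ K, α k * (a * b) ^ k) * ∑ l ∈ L, β l * ((∑ k ∈ K, α k * a ^ k) * c) ^ l =
      ∑ k ∈ K, ∑ l ∈ L, ∑ r ∈ range (l * K.sup id + 1),
        α k * β l * compositionCoeff K α l r * a ^ (k + r) * (b ^ k * c ^ l) := by
  simp_rw [mul_pow _ c, sum_mul_pow_pow, sum_mul, mul_sum]
  refine sum_congr rfl fun k _ => sum_congr rfl fun l _ => sum_congr rfl fun r _ => ?_
  ring

end CompositionCoeff

/-- rank-one decomposition of the face-splitting product.
With `ψ(x) = Σ_{k∈K} α_k x^k`, `φ(x) = Σ_{ℓ∈L} β_ℓ x^ℓ`,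
`γ_{ℓ,r} = Σ_{k∈K^ℓ, k_1+⋯+k_ℓ=r} α_{k_1}⋯α_{k_ℓ}`, `v_d = 1` and `w = e_d`,
the face-splitting product `ψ(uvᵀ) • φ(ψ(uvᵀ)wzᵀ)` equals
`Σ_{k∈K} Σ_{ℓ∈L} Σ_r α_k β_ℓ γ_{ℓ,r} u^{(k+r)} (v^{(k)} ⊗ z^{(ℓ)})ᵀ`
(entrywise; the inner sum over `r` is finite since `γ_{ℓ,r} = 0` for
`r > ℓ·max K`). -/
theorem stmt15 (n d m : ℕ) (hd : 2 ≤ d)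
    (K L : Finset ℕ) (α β : ℕ → ℝ) (ψ φ : ℝ → ℝ)
    (hψ : ∀ x : ℝ, ψ x = ∑ k ∈ K, α k * x ^ k)
    (hφ : ∀ x : ℝ, φ x = ∑ l ∈ L, β l * x ^ l)
    (γ : ℕ → ℕ → ℝ)
    (hγ : ∀ l r, γ l r =
      ∑ k ∈ Finset.filter (fun k : Fin l → ℕ => (∑ i, k i) = r)
          (Fintype.piFinset fun _ : Fin l => K),
        ∏ i, α (k i))
    (u : Fin n → ℝ) (v : Fin d → ℝ) (hv : v ⟨d - 1, by omega⟩ = 1)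
    (w : Fin d → ℝ)
    (hw : w = fun j : Fin d => if (j : ℕ) = d - 1 then (1 : ℝ) else 0)
    (z : Fin m → ℝ) :
    ∀ (i : Fin n) (jk : Fin d × Fin m),
      ψ (u i * v jk.1) * φ ((∑ j, ψ (u i * v j) * w j) * z jk.2) =
      ∑ k ∈ K, ∑ l ∈ L, ∑ r ∈ Finset.range (l * K.sup id + 1),
        α k * β l * γ l r * u i ^ (k + r) * (v jk.1 ^ k * z jk.2 ^ l) := by
  intro i jk
  obtain rfl : γ = compositionCoeff K α := by
    funext l r
    exact hγ l r
  have hw_single : w = Pi.single ⟨d - 1, by omega⟩ 1 := by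
    subst hw
    ext j
    simp [Pi.single_apply, Fin.ext_iff]
  have hcolumn : ∑ j, ψ (u i * v j) * w j = ψ (u i) := by
    rw [hw_single, ← dotProduct, dotProduct_single, hv, mul_one, mul_one]
  rw [hcolumn, hφ, hψ, hψ]
  exact sum_mul_pow_mul_sum_mul_pow_sum K L α β (u i) (v jk.1) (z jk.2)
end
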